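/- arXiv:2310.08473 — 6 statements merged into one kernel-verified Lean document; each statement's English description precedes it below -/
import Mathlib

section
/- Quantum minimax theorem (value part): For every Hermitian matrix R indexed by (Fin n × Fin m) × (Fin n × Fin m), the two-player quantum zero-sum game with payoff Tr(R(ρ⊗σ)) has a well-defined value: sup over density matrices ρ on ℂ^n of the inf over density matrices σ on ℂ^m of Tr(R(ρ⊗σ)) equals the inf over density matrices σ on ℂ^m of the sup over density matrices ρ on ℂ^n of Tr(R(ρ⊗σ)); moreover both the outer sup and the outer inf are attained. -/
open Matrix Kronecker
open scoped ComplexOrder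

/-- A density matrix: positive semidefinite with trace 1. -/
def IsDensity {d : Type*} [Fintype d] (ρ : Matrix d d ℂ) : Prop :=
  ρ.PosSemidef ∧ ρ.trace = 1

/-- Alice's payoff in the two-player quantum zero-sum game with payoff observable `R`. -/
noncomputable def payoff {n m : ℕ} (R : Matrix (Fin n × Fin m) (Fin n × Fin m) ℂ)
    (ρ : Matrix (Fin n) (Fin n) ℂ) (σ : Matrix (Fin m) (Fin m) ℂ) : ℝ :=
  ((R * (ρ ⊗ₖ σ)).trace).re

/-!
The payoff `(ρ, σ) ↦ Re Tr(R(ρ ⊗ σ))` is real-bilinear, hence continuous and both convex and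
concave in each variable, and the density matrices form a nonempty compact convex set
(compact because every entry of a density matrix has modulus at most `1`, by the `2 × 2`
principal minors). Sion's minimax theorem therefore yields a saddle point `(ρ₀, σ₀)`, and the
payoff at a saddle point is at once the sup-inf and the inf-sup, attained at `ρ₀` and `σ₀`.
-/

section SaddlePoint

variable {E F β : Type*} [ConditionallyCompleteLinearOrder β] {X : Set E} {Y : Set F}
  {f : E → F → β} {a : E} {b : F}

theorem IsSaddlePointOn.sInf_eq (h : IsSaddlePointOn X Y f a b) (ha : a ∈ X) (hb : b ∈ Y) :
    sInf {z | ∃ x ∈ X, z = f x b} = f a b :=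
  IsLeast.csInf_eq ⟨⟨a, ha, rfl⟩, by rintro _ ⟨x, hx, rfl⟩; exact h x hx b hb⟩

theorem IsSaddlePointOn.sSup_eq (h : IsSaddlePointOn X Y f a b) (ha : a ∈ X) (hb : b ∈ Y) :
    sSup {z | ∃ y ∈ Y, z = f a y} = f a b :=
  IsGreatest.csSup_eq ⟨⟨b, hb, rfl⟩, by rintro _ ⟨y, hy, rfl⟩; exact h a ha y hy⟩

variable [TopologicalSpace β] [OrderTopology β]

theorem IsSaddlePointOn.sSup_sInf_eq [TopologicalSpace E] (h : IsSaddlePointOn X Y f a b)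
    (ha : a ∈ X) (hb : b ∈ Y) (hX : IsCompact X) (hf : ∀ y ∈ Y, ContinuousOn (f · y) X) :
    sSup {w | ∃ y ∈ Y, w = sInf {z | ∃ x ∈ X, z = f x y}} = f a b := by
  refine IsGreatest.csSup_eq ⟨⟨b, hb, (h.sInf_eq ha hb).symm⟩, ?_⟩
  rintro _ ⟨y, hy, rfl⟩
  have hbdd : BddBelow {z | ∃ x ∈ X, z = f x y} :=
    (hX.bddBelow_image (hf y hy)).mono (by rintro _ ⟨x, hx, rfl⟩; exact ⟨x, hx, rfl⟩)
  exact (csInf_le hbdd ⟨a, ha, rfl⟩).trans (h a ha y hy)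

theorem IsSaddlePointOn.sInf_sSup_eq [TopologicalSpace F] (h : IsSaddlePointOn X Y f a b)
    (ha : a ∈ X) (hb : b ∈ Y) (hY : IsCompact Y) (hf : ∀ x ∈ X, ContinuousOn (f x) Y) :
    sInf {w | ∃ x ∈ X, w = sSup {z | ∃ y ∈ Y, z = f x y}} = f a b := by
  refine IsLeast.csInf_eq ⟨⟨a, ha, (h.sSup_eq ha hb).symm⟩, ?_⟩
  rintro _ ⟨x, hx, rfl⟩
  have hbdd : BddAbove {z | ∃ y ∈ Y, z = f x y} :=
    (hY.bddAbove_image (hf x hx)).mono (by rintro _ ⟨y, hy, rfl⟩; exact ⟨y, hy, rfl⟩)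
  exact (h x hx b hb).trans (le_csSup hbdd ⟨b, hb, rfl⟩)

end SaddlePoint

section DensityMatrices

variable {d : Type*}

theorem Matrix.PosSemidef.normSq_apply_le {A : Matrix d d ℂ} (hA : A.PosSemidef) (i j : d) :
    Complex.normSq (A i j) ≤ (A i i).re * (A j j).re := by
  have hdet := (hA.submatrix ![i, j]).det_nonneg
  have hji : A j i = star (A i j) := (hA.isHermitian.apply j i).symm
  have hii := Complex.le_def.mp (hA.diag_nonneg (i := i))
  have hjj := Complex.le_def.mp (hA.diag_nonneg (i := j))
  rw [det_fin_two] at hdet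
  simp only [submatrix_apply, Matrix.cons_val_zero, Matrix.cons_val_one, hji] at hdet
  have hdet_re := (Complex.le_def.mp hdet).1
  simp only [Complex.zero_re, Complex.sub_re, Complex.mul_re, Complex.star_def, Complex.conj_re,
    Complex.conj_im, Complex.zero_im] at hdet_re hii hjj
  rw [Complex.normSq_apply]
  nlinarith [hii.2, hjj.2]

variable [Fintype d]

theorem IsDensity.re_apply_self_le_one {ρ : Matrix d d ℂ} (hρ : IsDensity ρ) (i : d) :
    (ρ i i).re ≤ 1 := by
  have htr : ∑ k, (ρ k k).re = 1 := by
    simpa [trace, Complex.re_sum] using congrArg Complex.re hρ.2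
  rw [← htr]
  exact Finset.single_le_sum (f := fun k => (ρ k k).re)
    (fun k _ => (Complex.le_def.mp (hρ.1.diag_nonneg (i := k))).1) (Finset.mem_univ i)

theorem IsDensity.norm_apply_le_one {ρ : Matrix d d ℂ} (hρ : IsDensity ρ) (i j : d) :
    ‖ρ i j‖ ≤ 1 := by
  have hii := hρ.re_apply_self_le_one i
  have hjj := hρ.re_apply_self_le_one j
  have hjj_nonneg := (Complex.le_def.mp (hρ.1.diag_nonneg (i := j))).1
  have hij := hρ.1.normSq_apply_le i j
  rw [Complex.normSq_eq_norm_sq] at hij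
  simp only [Complex.zero_re] at hjj_nonneg
  nlinarith [norm_nonneg (ρ i j), mul_le_one₀ hii hjj_nonneg hjj]

theorem isClosed_setOf_posSemidef : IsClosed {A : Matrix d d ℂ | A.PosSemidef} := by
  simp only [posSemidef_iff_dotProduct_mulVec, Set.ofPred_and, Set.ofPred_forall]
  exact (isClosed_eq continuous_id.matrix_conjTranspose continuous_id).inter <|
    isClosed_iInter fun x => isClosed_le continuous_const <|
      continuous_const.dotProduct (continuous_id.matrix_mulVec continuous_const)

theorem isCompact_setOf_isDensity : IsCompact {ρ : Matrix d d ℂ | IsDensity ρ} := by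
  have hclosed : IsClosed {ρ : Matrix d d ℂ | IsDensity ρ} :=
    isClosed_setOf_posSemidef.inter (isClosed_eq continuous_id.matrix_trace continuous_const)
  refine (isCompact_univ_pi fun _ => isCompact_univ_pi fun _ =>
    isCompact_closedBall (0 : ℂ) 1).of_isClosed_subset hclosed fun ρ hρ i _ j _ => ?_
  simpa using hρ.norm_apply_le_one i j

theorem convex_setOf_isDensity : Convex ℝ {ρ : Matrix d d ℂ | IsDensity ρ} := by
  rintro ρ ⟨hρ, hρ_tr⟩ σ ⟨hσ, hσ_tr⟩ a b ha hb hab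
  refine ⟨(hρ.smul ha).add (hσ.smul hb), ?_⟩
  rw [trace_add, trace_smul, trace_smul, hρ_tr, hσ_tr, ← add_smul, hab, one_smul]

theorem isDensity_inv_card_smul_one [DecidableEq d] [Nonempty d] :
    IsDensity ((Fintype.card d : ℝ)⁻¹ • (1 : Matrix d d ℂ)) := by
  refine ⟨PosSemidef.one.smul (by positivity), ?_⟩
  rw [trace_smul, trace_one, Complex.real_smul]
  simp

end DensityMatrices

section Payoff

variable {n m : ℕ} (R : Matrix (Fin n × Fin m) (Fin n × Fin m) ℂ)

noncomputable def payoffBilin :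
    Matrix (Fin n) (Fin n) ℂ →ₗ[ℝ] Matrix (Fin m) (Fin m) ℂ →ₗ[ℝ] ℝ :=
  (kroneckerBilinear (R := ℝ) (α := ℂ)).compr₂
    (Complex.reLm ∘ₗ ((traceLinearMap _ ℂ ℂ ∘ₗ LinearMap.mulLeft ℂ R).restrictScalars ℝ))

theorem continuous_payoff_left (ρ : Matrix (Fin n) (Fin n) ℂ) : Continuous (payoff R ρ) :=
  (payoffBilin R ρ).continuous_of_finiteDimensional

theorem continuous_payoff_right (σ : Matrix (Fin m) (Fin m) ℂ) : Continuous (payoff R · σ) :=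
  ((payoffBilin R).flip σ).continuous_of_finiteDimensional

-- `IsSaddlePointOn` minimizes in the first argument of `f`, hence Bob's `σ` comes first.
theorem exists_isSaddlePointOn_payoff [Nonempty (Fin n)] [Nonempty (Fin m)] :
    ∃ σ₀ ∈ {σ : Matrix (Fin m) (Fin m) ℂ | IsDensity σ},
      ∃ ρ₀ ∈ {ρ : Matrix (Fin n) (Fin n) ℂ | IsDensity ρ},
        IsSaddlePointOn {σ | IsDensity σ} {ρ | IsDensity ρ} (fun σ ρ ↦ payoff R ρ σ) σ₀ ρ₀ :=
  Sion.exists_isSaddlePointOn ⟨_, isDensity_inv_card_smul_one⟩ convex_setOf_isDensity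
    isCompact_setOf_isDensity
    (fun ρ _ ↦ (continuous_payoff_left R ρ).lowerSemicontinuous.lowerSemicontinuousOn _)
    (fun ρ _ ↦ ((payoffBilin R ρ).convexOn convex_setOf_isDensity).quasiconvexOn)
    convex_setOf_isDensity ⟨_, isDensity_inv_card_smul_one⟩ isCompact_setOf_isDensity
    (fun σ _ ↦ (continuous_payoff_right R σ).upperSemicontinuous.upperSemicontinuousOn _)
    (fun σ _ ↦ (((payoffBilin R).flip σ).concaveOn convex_setOf_isDensity).quasiconcaveOn)

end Payoff

theorem stmt_0_general {n m : ℕ} (hn : 0 < n) (hm : 0 < m)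
    (R : Matrix (Fin n × Fin m) (Fin n × Fin m) ℂ) :
    (sSup {x : ℝ | ∃ ρ, IsDensity ρ ∧ x = sInf {y : ℝ | ∃ σ, IsDensity σ ∧ y = payoff R ρ σ}}
      = sInf {x : ℝ | ∃ σ, IsDensity σ ∧ x = sSup {y : ℝ | ∃ ρ, IsDensity ρ ∧ y = payoff R ρ σ}})
    ∧ (∃ ρ₀, IsDensity ρ₀ ∧
        sInf {y : ℝ | ∃ σ, IsDensity σ ∧ y = payoff R ρ₀ σ}
          = sSup {x : ℝ | ∃ ρ, IsDensity ρ ∧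
              x = sInf {y : ℝ | ∃ σ, IsDensity σ ∧ y = payoff R ρ σ}})
    ∧ (∃ σ₀, IsDensity σ₀ ∧
        sSup {y : ℝ | ∃ ρ, IsDensity ρ ∧ y = payoff R ρ σ₀}
          = sInf {x : ℝ | ∃ σ, IsDensity σ ∧
              x = sSup {y : ℝ | ∃ ρ, IsDensity ρ ∧ y = payoff R ρ σ}}) := by
  have := Fin.pos_iff_nonempty.mp hn
  have := Fin.pos_iff_nonempty.mp hm
  obtain ⟨σ₀, hσ₀, ρ₀, hρ₀, hsaddle⟩ := exists_isSaddlePointOn_payoff R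
  have hsup_inf := hsaddle.sSup_sInf_eq hσ₀ hρ₀ isCompact_setOf_isDensity
    fun ρ _ ↦ (continuous_payoff_left R ρ).continuousOn
  have hinf_sup := hsaddle.sInf_sSup_eq hσ₀ hρ₀ isCompact_setOf_isDensity
    fun σ _ ↦ (continuous_payoff_right R σ).continuousOn
  exact ⟨hsup_inf.trans hinf_sup.symm,
    ⟨ρ₀, hρ₀, (hsaddle.sInf_eq hσ₀ hρ₀).trans hsup_inf.symm⟩,
    ⟨σ₀, hσ₀, (hsaddle.sSup_eq hσ₀ hρ₀).trans hinf_sup.symm⟩⟩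

/-- Quantum minimax theorem (value part): sup-inf equals inf-sup, and both the outer
sup and the outer inf are attained. -/
theorem stmt_0 {n m : ℕ} (hn : 0 < n) (hm : 0 < m)
    (R : Matrix (Fin n × Fin m) (Fin n × Fin m) ℂ) (hR : R.IsHermitian) :
    (sSup {x : ℝ | ∃ ρ, IsDensity ρ ∧ x = sInf {y : ℝ | ∃ σ, IsDensity σ ∧ y = payoff R ρ σ}}
      = sInf {x : ℝ | ∃ σ, IsDensity σ ∧ x = sSup {y : ℝ | ∃ ρ, IsDensity ρ ∧ y = payoff R ρ σ}})
    ∧ (∃ ρ₀, IsDensity ρ₀ ∧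
        sInf {y : ℝ | ∃ σ, IsDensity σ ∧ y = payoff R ρ₀ σ}
          = sSup {x : ℝ | ∃ ρ, IsDensity ρ ∧
              x = sInf {y : ℝ | ∃ σ, IsDensity σ ∧ y = payoff R ρ σ}})
    ∧ (∃ σ₀, IsDensity σ₀ ∧
        sSup {y : ℝ | ∃ ρ, IsDensity ρ ∧ y = payoff R ρ σ₀}
          = sInf {x : ℝ | ∃ σ, IsDensity σ ∧
              x = sSup {y : ℝ | ∃ ρ, IsDensity ρ ∧ y = payoff R ρ σ}}) :=
  stmt_0_general hn hm R
end

section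
/- Quantum minimax theorem (characterization of equilibria): Let R be a Hermitian matrix indexed by (Fin n × Fin m) × (Fin n × Fin m) and let v = sup_ρ inf_σ Tr(R(ρ⊗σ)) over density matrices ρ on ℂ^n and σ on ℂ^m. Then a pair (ρ*, σ*) of density matrices is a quantum Nash equilibrium of the game (meaning Tr(R(ρ⊗σ*)) ≤ Tr(R(ρ*⊗σ*)) for all density matrices ρ on ℂ^n and Tr(R(ρ*⊗σ)) ≥ Tr(R(ρ*⊗σ*)) for all density matrices σ on ℂ^m) if and only if Tr_A(R(ρ*⊗I_m)) − v·I_m is positive semidefinite and v·I_n − Tr_B(R(I_n⊗σ*)) is positive semidefinite. Moreover every quantum Nash equilibrium attains the value: Tr(R(ρ*⊗σ*)) = v. -/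
/-!
Each payoff is linear in the opponent's strategy through a partial trace:
`payoff R ρ σ = re Tr(trA(R(ρ ⊗ I)) σ) = re Tr(trB(R(I ⊗ σ)) ρ)`, and these partial traces are
Hermitian. For Hermitian `M`, `c ≤ re Tr(M σ)` holds for every density matrix `σ` iff `M - c I`
is positive semidefinite (test against normalised rank-one projectors `x x†/‖x‖²`). Hence the two
semidefinite conditions say that `ρs` guarantees Alice at least `v` and `σs` concedes at most `v`,
which forces `payoff R ρs σs = v` and the equilibrium inequalities. Conversely, at a saddle point
the sup-inf defining `v` is attained there; the inner infima are finite because every Hermitian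
`M` has `M - c I` positive semidefinite for `c = -‖M‖`.
-/

open Matrix Kronecker
open scoped ComplexOrder

/-- Partial trace over the first (n-dimensional) register. -/
noncomputable def trA {n m : ℕ} (M : Matrix (Fin n × Fin m) (Fin n × Fin m) ℂ) :
    Matrix (Fin m) (Fin m) ℂ :=
  fun b b' => ∑ a, M (a, b) (a, b')

/-- Partial trace over the second (m-dimensional) register. -/
noncomputable def trB {n m : ℕ} (M : Matrix (Fin n × Fin m) (Fin n × Fin m) ℂ) :
    Matrix (Fin n) (Fin n) ℂ :=
  fun a a' => ∑ b, M (a, b) (a', b)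

/-- The value of the game: sup over density matrices ρ of the inf over density matrices σ. -/
noncomputable def gameValue {n m : ℕ} (R : Matrix (Fin n × Fin m) (Fin n × Fin m) ℂ) : ℝ :=
  sSup {x : ℝ | ∃ ρ, IsDensity ρ ∧ x = sInf {y : ℝ | ∃ σ, IsDensity σ ∧ y = payoff R ρ σ}}

namespace Matrix

variable {d : Type*} [Fintype d]

theorem PosSemidef.trace_eq_ofReal {P : Matrix d d ℂ} (hP : P.PosSemidef) :
    P.trace = P.trace.re :=
  Complex.ext rfl (Complex.nonneg_iff.mp hP.trace_nonneg).2.symm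

theorem PosSemidef.trace_mul_nonneg {A B : Matrix d d ℂ} (hA : A.PosSemidef)
    (hB : B.PosSemidef) : 0 ≤ (A * B).trace := by
  classical
  open scoped MatrixOrder Matrix.Norms.L2Operator in
  obtain ⟨X, rfl⟩ := CStarAlgebra.nonneg_iff_eq_star_mul_self.mp hB.nonneg
  rw [star_eq_conjTranspose, ← Matrix.mul_assoc, trace_mul_cycle]
  exact (hA.mul_mul_conjTranspose_same X).trace_nonneg

theorem re_trace_mul_nonneg_of_forall_density {A : Matrix d d ℂ}
    (h : ∀ σ, IsDensity σ → 0 ≤ (A * σ).trace.re) {P : Matrix d d ℂ} (hP : P.PosSemidef) :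
    0 ≤ (A * P).trace.re := by
  set t := P.trace.re
  rcases (Complex.nonneg_iff.mp hP.trace_nonneg).1.lt_or_eq with ht | ht
  · have hσ : IsDensity (t⁻¹ • P) := by
      refine ⟨hP.smul (inv_nonneg.2 ht.le), ?_⟩
      rw [trace_smul, hP.trace_eq_ofReal, Complex.real_smul, ← Complex.ofReal_mul,
        inv_mul_cancel₀ ht.ne', Complex.ofReal_one]
    have := h _ hσ
    rw [Matrix.mul_smul, trace_smul, Complex.smul_re] at this
    exact (mul_nonneg_iff_of_pos_left (inv_pos.2 ht)).mp this
  · have : P = 0 := hP.trace_eq_zero_iff.mp (by rw [hP.trace_eq_ofReal, ← ht]; simp)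
    simp [this]

theorem IsHermitian.posSemidef_iff_forall_density {A : Matrix d d ℂ} (hA : A.IsHermitian) :
    A.PosSemidef ↔ ∀ σ, IsDensity σ → 0 ≤ (A * σ).trace.re := by
  refine ⟨fun h σ hσ => (Complex.nonneg_iff.mp (h.trace_mul_nonneg hσ.1)).1, fun h => ?_⟩
  refine .of_dotProduct_mulVec_nonneg hA fun x =>
    Complex.nonneg_iff.mpr ⟨?_, (hA.im_star_dotProduct_mulVec_self x).symm⟩
  have := re_trace_mul_nonneg_of_forall_density h (posSemidef_vecMulVec_self_star x)
  rwa [mul_vecMulVec, trace_vecMulVec, dotProduct_comm] at this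

variable [DecidableEq d]

theorem IsHermitian.le_re_trace_mul_density_iff {M : Matrix d d ℂ} (hM : M.IsHermitian) (c : ℝ) :
    (∀ σ, IsDensity σ → c ≤ (M * σ).trace.re) ↔ (M - (c : ℂ) • 1).PosSemidef := by
  have hMc : (M - (c : ℂ) • 1).IsHermitian := hM.sub (by simp [IsHermitian, conjTranspose_smul])
  rw [hMc.posSemidef_iff_forall_density]
  refine forall₂_congr fun σ hσ => ?_
  rw [Matrix.sub_mul, trace_sub, smul_mul, Matrix.one_mul, trace_smul, hσ.2]
  simp

theorem IsHermitian.re_trace_mul_density_le_iff {M : Matrix d d ℂ} (hM : M.IsHermitian) (c : ℝ) :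
    (∀ ρ, IsDensity ρ → (M * ρ).trace.re ≤ c) ↔ ((c : ℂ) • 1 - M).PosSemidef := by
  simpa only [Complex.ofReal_neg, neg_smul, sub_neg_eq_add, neg_add_eq_sub, Matrix.neg_mul,
    trace_neg, Complex.neg_re, neg_le_neg_iff] using hM.neg.le_re_trace_mul_density_iff (-c)

theorem IsHermitian.exists_posSemidef_sub_smul_one {M : Matrix d d ℂ} (hM : M.IsHermitian) :
    ∃ c : ℝ, (M - (c : ℂ) • 1).PosSemidef := by
  open scoped MatrixOrder Matrix.Norms.L2Operator in
  refine ⟨-‖M‖, ?_⟩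
  have := hM.isSelfAdjoint.neg_algebraMap_norm_le_self
  rw [le_iff, Algebra.algebraMap_eq_smul_one] at this
  simpa using this

end Matrix

section PartialTrace

variable {n m : ℕ}

theorem trace_mul_one_kronecker (M : Matrix (Fin n × Fin m) (Fin n × Fin m) ℂ)
    (σ : Matrix (Fin m) (Fin m) ℂ) :
    (M * ((1 : Matrix (Fin n) (Fin n) ℂ) ⊗ₖ σ)).trace = (trA M * σ).trace := by
  simp only [trace, diag_apply, mul_apply, kroneckerMap_apply, one_apply, ite_mul, one_mul,
    zero_mul, mul_ite, mul_zero, Fintype.sum_prod_type, Finset.sum_ite_irrel,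
    Finset.sum_const_zero, Finset.sum_ite_eq', Finset.mem_univ, ↓reduceIte, trA, Finset.sum_mul]
  rw [Finset.sum_comm]
  exact Finset.sum_congr rfl fun _ _ => Finset.sum_comm

theorem trace_mul_kronecker_one (M : Matrix (Fin n × Fin m) (Fin n × Fin m) ℂ)
    (ρ : Matrix (Fin n) (Fin n) ℂ) :
    (M * (ρ ⊗ₖ (1 : Matrix (Fin m) (Fin m) ℂ))).trace = (trB M * ρ).trace := by
  simp only [trace, diag_apply, mul_apply, kroneckerMap_apply, one_apply, mul_ite, mul_one,
    mul_zero, Fintype.sum_prod_type, Finset.sum_ite_eq', Finset.mem_univ, ↓reduceIte, trB,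
    Finset.sum_mul]
  exact Finset.sum_congr rfl fun _ _ => Finset.sum_comm

theorem conjTranspose_trA (M : Matrix (Fin n × Fin m) (Fin n × Fin m) ℂ) :
    (trA M)ᴴ = trA Mᴴ := by
  ext; simp [trA]

theorem conjTranspose_trB (M : Matrix (Fin n × Fin m) (Fin n × Fin m) ℂ) :
    (trB M)ᴴ = trB Mᴴ := by
  ext; simp [trB]

theorem trA_mul_kronecker_one_comm (M : Matrix (Fin n × Fin m) (Fin n × Fin m) ℂ)
    (X : Matrix (Fin n) (Fin n) ℂ) :
    trA (M * (X ⊗ₖ (1 : Matrix (Fin m) (Fin m) ℂ))) = trA ((X ⊗ₖ 1) * M) := by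
  ext b b'
  simp only [trA, mul_apply, kroneckerMap_apply, one_apply, mul_ite, mul_one, mul_zero,
    Fintype.sum_prod_type, Finset.sum_ite_eq', Finset.mem_univ, ↓reduceIte, ite_mul, zero_mul,
    Finset.sum_ite_eq]
  rw [Finset.sum_comm]
  exact Finset.sum_congr rfl fun _ _ => Finset.sum_congr rfl fun _ _ => mul_comm _ _

theorem trB_mul_one_kronecker_comm (M : Matrix (Fin n × Fin m) (Fin n × Fin m) ℂ)
    (Y : Matrix (Fin m) (Fin m) ℂ) :
    trB (M * ((1 : Matrix (Fin n) (Fin n) ℂ) ⊗ₖ Y)) = trB ((1 ⊗ₖ Y) * M) := by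
  ext a a'
  simp only [trB, mul_apply, kroneckerMap_apply, one_apply, ite_mul, one_mul, zero_mul, mul_ite,
    mul_zero, Fintype.sum_prod_type, Finset.sum_ite_irrel, Finset.sum_const_zero,
    Finset.sum_ite_eq', Finset.mem_univ, ↓reduceIte, Finset.sum_ite_eq]
  rw [Finset.sum_comm]
  exact Finset.sum_congr rfl fun _ _ => Finset.sum_congr rfl fun _ _ => mul_comm _ _

theorem Matrix.IsHermitian.trA_mul_kronecker_one {R : Matrix (Fin n × Fin m) (Fin n × Fin m) ℂ}
    (hR : R.IsHermitian) {X : Matrix (Fin n) (Fin n) ℂ} (hX : X.IsHermitian) :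
    (trA (R * (X ⊗ₖ (1 : Matrix (Fin m) (Fin m) ℂ)))).IsHermitian := by
  rw [IsHermitian, conjTranspose_trA, conjTranspose_mul, conjTranspose_kronecker,
    conjTranspose_one, hX.eq, hR.eq, trA_mul_kronecker_one_comm]

theorem Matrix.IsHermitian.trB_mul_one_kronecker {R : Matrix (Fin n × Fin m) (Fin n × Fin m) ℂ}
    (hR : R.IsHermitian) {Y : Matrix (Fin m) (Fin m) ℂ} (hY : Y.IsHermitian) :
    (trB (R * ((1 : Matrix (Fin n) (Fin n) ℂ) ⊗ₖ Y))).IsHermitian := by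
  rw [IsHermitian, conjTranspose_trB, conjTranspose_mul, conjTranspose_kronecker,
    conjTranspose_one, hY.eq, hR.eq, trB_mul_one_kronecker_comm]

end PartialTrace

section Game

variable {n m : ℕ}

theorem payoff_eq_re_trace_trA (R : Matrix (Fin n × Fin m) (Fin n × Fin m) ℂ)
    (ρ : Matrix (Fin n) (Fin n) ℂ) (σ : Matrix (Fin m) (Fin m) ℂ) :
    payoff R ρ σ = (trA (R * (ρ ⊗ₖ (1 : Matrix (Fin m) (Fin m) ℂ))) * σ).trace.re := by
  rw [payoff, ← trace_mul_one_kronecker, Matrix.mul_assoc, ← mul_kronecker_mul,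
    Matrix.mul_one, Matrix.one_mul]

theorem payoff_eq_re_trace_trB (R : Matrix (Fin n × Fin m) (Fin n × Fin m) ℂ)
    (ρ : Matrix (Fin n) (Fin n) ℂ) (σ : Matrix (Fin m) (Fin m) ℂ) :
    payoff R ρ σ = (trB (R * ((1 : Matrix (Fin n) (Fin n) ℂ) ⊗ₖ σ)) * ρ).trace.re := by
  rw [payoff, ← trace_mul_kronecker_one, Matrix.mul_assoc, ← mul_kronecker_mul,
    Matrix.mul_one, Matrix.one_mul]
theorem forall_le_payoff_iff {R : Matrix (Fin n × Fin m) (Fin n × Fin m) ℂ} (hR : R.IsHermitian)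
    {ρ : Matrix (Fin n) (Fin n) ℂ} (hρ : ρ.IsHermitian) (c : ℝ) :
    (∀ σ, IsDensity σ → c ≤ payoff R ρ σ) ↔
      (trA (R * (ρ ⊗ₖ (1 : Matrix (Fin m) (Fin m) ℂ))) - (c : ℂ) • 1).PosSemidef := by
  simpa only [payoff_eq_re_trace_trA] using
    (hR.trA_mul_kronecker_one hρ).le_re_trace_mul_density_iff c

theorem forall_payoff_le_iff {R : Matrix (Fin n × Fin m) (Fin n × Fin m) ℂ} (hR : R.IsHermitian)
    {σ : Matrix (Fin m) (Fin m) ℂ} (hσ : σ.IsHermitian) (c : ℝ) :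
    (∀ ρ, IsDensity ρ → payoff R ρ σ ≤ c) ↔
      ((c : ℂ) • 1 - trB (R * ((1 : Matrix (Fin n) (Fin n) ℂ) ⊗ₖ σ))).PosSemidef := by
  simpa only [payoff_eq_re_trace_trB] using
    (hR.trB_mul_one_kronecker hσ).re_trace_mul_density_le_iff c

theorem bddBelow_payoff {R : Matrix (Fin n × Fin m) (Fin n × Fin m) ℂ} (hR : R.IsHermitian)
    {ρ : Matrix (Fin n) (Fin n) ℂ} (hρ : ρ.IsHermitian) :
    BddBelow {y | ∃ σ, IsDensity σ ∧ y = payoff R ρ σ} := by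
  obtain ⟨c, hc⟩ := (hR.trA_mul_kronecker_one hρ).exists_posSemidef_sub_smul_one
  refine ⟨c, ?_⟩
  rintro _ ⟨σ, hσ, rfl⟩
  exact (forall_le_payoff_iff hR hρ c).mpr hc σ hσ

theorem sSup_sInf_eq_of_isSaddle {α β : Type*} {P : α → Prop} {Q : β → Prop} {f : α → β → ℝ}
    {a₀ : α} {b₀ : β} (ha₀ : P a₀) (hb₀ : Q b₀)
    (hbdd : ∀ a, P a → BddBelow {y | ∃ b, Q b ∧ y = f a b})
    (hmax : ∀ a, P a → f a b₀ ≤ f a₀ b₀) (hmin : ∀ b, Q b → f a₀ b₀ ≤ f a₀ b) :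
    sSup {x | ∃ a, P a ∧ x = sInf {y | ∃ b, Q b ∧ y = f a b}} = f a₀ b₀ := by
  have hinf : ∀ a, P a → sInf {y | ∃ b, Q b ∧ y = f a b} ≤ f a b₀ := fun a ha =>
    csInf_le (hbdd a ha) ⟨b₀, hb₀, rfl⟩
  have hinf₀ : sInf {y | ∃ b, Q b ∧ y = f a₀ b} = f a₀ b₀ := by
    refine le_antisymm (hinf a₀ ha₀) (le_csInf ⟨_, b₀, hb₀, rfl⟩ ?_)
    rintro _ ⟨b, hb, rfl⟩
    exact hmin b hb
  have hub : ∀ x ∈ {x | ∃ a, P a ∧ x = sInf {y | ∃ b, Q b ∧ y = f a b}}, x ≤ f a₀ b₀ := by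
    rintro _ ⟨a, ha, rfl⟩
    exact (hinf a ha).trans (hmax a ha)
  exact le_antisymm (csSup_le ⟨_, a₀, ha₀, rfl⟩ hub) (le_csSup ⟨_, hub⟩ ⟨a₀, ha₀, hinf₀.symm⟩)

def IsNashEquilibrium (R : Matrix (Fin n × Fin m) (Fin n × Fin m) ℂ)
    (ρs : Matrix (Fin n) (Fin n) ℂ) (σs : Matrix (Fin m) (Fin m) ℂ) : Prop :=
  (∀ ρ, IsDensity ρ → payoff R ρ σs ≤ payoff R ρs σs) ∧
    (∀ σ, IsDensity σ → payoff R ρs σs ≤ payoff R ρs σ)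

theorem IsNashEquilibrium.payoff_eq_gameValue {R : Matrix (Fin n × Fin m) (Fin n × Fin m) ℂ}
    (hR : R.IsHermitian) {ρs : Matrix (Fin n) (Fin n) ℂ} {σs : Matrix (Fin m) (Fin m) ℂ}
    (hρs : IsDensity ρs) (hσs : IsDensity σs) (h : IsNashEquilibrium R ρs σs) :
    payoff R ρs σs = gameValue R :=
  (sSup_sInf_eq_of_isSaddle hρs hσs (fun _ hρ => bddBelow_payoff hR hρ.1.1) h.1 h.2).symm

end Game

/-- Quantum minimax theorem (characterization of equilibria). -/
theorem stmt_1 {n m : ℕ}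
    (R : Matrix (Fin n × Fin m) (Fin n × Fin m) ℂ) (hR : R.IsHermitian)
    (ρs : Matrix (Fin n) (Fin n) ℂ) (σs : Matrix (Fin m) (Fin m) ℂ)
    (hρs : IsDensity ρs) (hσs : IsDensity σs) :
    (((∀ ρ, IsDensity ρ → payoff R ρ σs ≤ payoff R ρs σs) ∧
      (∀ σ, IsDensity σ → payoff R ρs σs ≤ payoff R ρs σ)) ↔
      ((trA (R * (ρs ⊗ₖ (1 : Matrix (Fin m) (Fin m) ℂ)))
          - ((gameValue R : ℂ) • (1 : Matrix (Fin m) (Fin m) ℂ))).PosSemidef ∧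
        (((gameValue R : ℂ) • (1 : Matrix (Fin n) (Fin n) ℂ))
          - trB (R * ((1 : Matrix (Fin n) (Fin n) ℂ) ⊗ₖ σs))).PosSemidef))
    ∧ (((∀ ρ, IsDensity ρ → payoff R ρ σs ≤ payoff R ρs σs) ∧
        (∀ σ, IsDensity σ → payoff R ρs σs ≤ payoff R ρs σ)) →
        payoff R ρs σs = gameValue R) := by
  change (IsNashEquilibrium R ρs σs ↔ _) ∧ (IsNashEquilibrium R ρs σs → _)
  have hvalue := IsNashEquilibrium.payoff_eq_gameValue hR hρs hσs
  refine ⟨⟨fun h => ?_, fun ⟨hA, hB⟩ => ?_⟩, hvalue⟩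
  · rw [← forall_le_payoff_iff hR hρs.1.1, ← forall_payoff_le_iff hR hσs.1.1, ← hvalue h]
    exact ⟨h.2, h.1⟩
  · have hσ := (forall_le_payoff_iff hR hρs.1.1 _).mpr hA
    have hρ := (forall_payoff_le_iff hR hσs.1.1 _).mpr hB
    have hv : payoff R ρs σs = gameValue R := le_antisymm (hρ ρs hρs) (hσ σs hσs)
    exact ⟨fun ρ hρ' => hv ▸ hρ ρ hρ', fun σ hσ' => hv ▸ hσ σ hσ'⟩
end

section
/- No-Φ-regret implies approximate quantum Φ-equilibrium (finite-horizon version of Theorem 3.1(a)): Fix a k-player quantum game with utility tensors R_i and, for each player i, a family Φ_i of linear maps on n_i×n_i complex matrices. Let ρ^t = ⊗_i ρ_i^t (t = 1,…,T) be product profiles and let ρ̄ = (1/T)·Σ_{t=1}^T ρ^t be their time average. If for every player i and every φ_i ∈ Φ_i the time-averaged Φ-regret is at most ε, i.e. (1/T)·Σ_{t=1}^T Tr(R_i·(φ_i⊗id_{-i})(ρ^t)) − (1/T)·Σ_{t=1}^T Tr(R_i·ρ^t) ≤ ε, then ρ̄ is a separable ε-quantum-Φ-equilibrium: ρ̄ is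 a convex combination of product profiles and Tr(R_i·(φ_i⊗id_{-i})(ρ̄)) ≤ Tr(R_i·ρ̄) + ε for every player i and every φ_i ∈ Φ_i. -/
open Matrix
open scoped ComplexOrder

/-- The product profile `⊗ᵢ ρᵢ`, a joint matrix on `S = ∏ⱼ Fin (n j)` with entries
`∏ᵢ ρᵢ(sᵢ, s'ᵢ)`. -/
noncomputable def prodProfile {k : ℕ} {n : Fin k → ℕ}
    (ρ : ∀ i, Matrix (Fin (n i)) (Fin (n i)) ℂ) :
    Matrix (∀ j, Fin (n j)) (∀ j, Fin (n j)) ℂ :=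
  fun s s' => ∏ j, ρ j (s j) (s' j)

/-- The slicewise extension `φ ⊗ id₋ᵢ` of a map `φ` on player `i`'s register to joint
matrices: each `nᵢ × nᵢ` slice `M_{t,t'}(a,a') = M((a;t),(a';t'))` is replaced by
`φ(M_{t,t'})`. -/
def extendMap {k : ℕ} {n : Fin k → ℕ} (i : Fin k)
    (φ : Matrix (Fin (n i)) (Fin (n i)) ℂ → Matrix (Fin (n i)) (Fin (n i)) ℂ)
    (M : Matrix (∀ j, Fin (n j)) (∀ j, Fin (n j)) ℂ) :
    Matrix (∀ j, Fin (n j)) (∀ j, Fin (n j)) ℂ :=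
  fun s s' =>
    φ (fun a a' => M (Function.update s i a) (Function.update s' i a')) (s i) (s' i)

/- Since `ρ̄` is the uniform mixture of the product profiles `ρᵗ`, it is separable by definition,
and the equilibrium inequality is the averaged regret bound pushed through the linear maps
`M ↦ Re Tr(Rᵢ (φᵢ ⊗ id₋ᵢ)(M))` and `M ↦ Re Tr(Rᵢ M)`. -/

def extendMapₗ {k : ℕ} {n : Fin k → ℕ} (i : Fin k)
    (φ : Matrix (Fin (n i)) (Fin (n i)) ℂ →ₗ[ℂ] Matrix (Fin (n i)) (Fin (n i)) ℂ) :
    Matrix (∀ j, Fin (n j)) (∀ j, Fin (n j)) ℂ →ₗ[ℂ] Matrix (∀ j, Fin (n j)) (∀ j, Fin (n j)) ℂ where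
  toFun := extendMap i φ
  map_add' M N := by
    ext s s'
    exact congrFun₂ (φ.map_add _ _) (s i) (s' i)
  map_smul' c M := by
    ext s s'
    exact congrFun₂ (φ.map_smul c _) (s i) (s' i)

theorem extendMapₗ_apply {k : ℕ} {n : Fin k → ℕ} (i : Fin k)
    (φ : Matrix (Fin (n i)) (Fin (n i)) ℂ →ₗ[ℂ] Matrix (Fin (n i)) (Fin (n i)) ℂ)
    (M : Matrix (∀ j, Fin (n j)) (∀ j, Fin (n j)) ℂ) :
    extendMapₗ i φ M = extendMap i φ M :=
  rfl

theorem re_map_real_smul_sum {E ι : Type*} [AddCommMonoid E] [Module ℂ E] (f : E →ₗ[ℂ] ℂ)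
    (c : ℝ) (s : Finset ι) (x : ι → E) :
    (f ((c : ℂ) • ∑ t ∈ s, x t)).re = c * ∑ t ∈ s, (f (x t)).re := by
  rw [map_smul, map_sum, smul_eq_mul, Complex.re_ofReal_mul, Complex.re_sum]

theorem re_trace_mul_real_smul_sum {d ι : Type*} [Fintype d] [DecidableEq d]
    (A : Matrix d d ℂ) (L : Matrix d d ℂ →ₗ[ℂ] Matrix d d ℂ)
    (c : ℝ) (s : Finset ι) (x : ι → Matrix d d ℂ) :
    ((A * L ((c : ℂ) • ∑ t ∈ s, x t)).trace).re = c * ∑ t ∈ s, ((A * L (x t)).trace).re :=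
  re_map_real_smul_sum (traceLinearMap d ℂ ℂ ∘ₗ LinearMap.mulLeft ℂ A ∘ₗ L) c s x

theorem stmt_2_general {k : ℕ} {n : Fin k → ℕ}
    (R : ∀ _ : Fin k, Matrix (∀ j, Fin (n j)) (∀ j, Fin (n j)) ℂ)
    (Φ : ∀ i : Fin k, Set (Matrix (Fin (n i)) (Fin (n i)) ℂ →ₗ[ℂ] Matrix (Fin (n i)) (Fin (n i)) ℂ))
    (T : ℕ) (hT : 0 < T)
    (ρ : Fin T → ∀ i, Matrix (Fin (n i)) (Fin (n i)) ℂ)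
    (hρ : ∀ t i, IsDensity (ρ t i))
    (ε : ℝ)
    (hreg : ∀ i, ∀ φ ∈ Φ i,
      (1 / T : ℝ) * ∑ t, ((R i * extendMap i (⇑φ) (prodProfile (ρ t))).trace).re
        - (1 / T : ℝ) * ∑ t, ((R i * prodProfile (ρ t)).trace).re ≤ ε) :
    (∃ (m : ℕ) (lam : Fin m → ℝ) (σ : Fin m → ∀ i, Matrix (Fin (n i)) (Fin (n i)) ℂ),
      (∀ l, 0 ≤ lam l) ∧ (∑ l, lam l = 1) ∧ (∀ l i, IsDensity (σ l i)) ∧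
      (1 / T : ℂ) • ∑ t, prodProfile (ρ t) = ∑ l, (lam l : ℂ) • prodProfile (σ l))
    ∧ (∀ i, ∀ φ ∈ Φ i,
      ((R i * extendMap i (⇑φ) ((1 / T : ℂ) • ∑ t, prodProfile (ρ t))).trace).re
        ≤ ((R i * ((1 / T : ℂ) • ∑ t, prodProfile (ρ t))).trace).re + ε) := by
  have hcast : (1 / T : ℂ) = ((1 / T : ℝ) : ℂ) := by push_cast; rfl
  refine ⟨⟨T, fun _ => 1 / T, ρ, fun _ => by positivity, ?_, hρ, ?_⟩, fun i φ hφ => ?_⟩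
  · simp [Nat.cast_ne_zero.mpr hT.ne']
  · simp only [hcast, Finset.smul_sum]
  · have hdev := re_trace_mul_real_smul_sum (R i) (extendMapₗ i φ) (1 / T) Finset.univ
      fun t => prodProfile (ρ t)
    have havg := re_trace_mul_real_smul_sum (R i) LinearMap.id (1 / T) Finset.univ
      fun t => prodProfile (ρ t)
    simp only [extendMapₗ_apply, LinearMap.id_apply] at hdev havg
    rw [hcast, hdev, havg]
    linarith [hreg i φ hφ]

/-- No-Φ-regret implies approximate quantum Φ-equilibrium (finite-horizon version of
Theorem 3.1(a)). -/
theorem stmt_2 {k : ℕ} {n : Fin k → ℕ}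
    (R : ∀ _ : Fin k, Matrix (∀ j, Fin (n j)) (∀ j, Fin (n j)) ℂ)
    (hR : ∀ i, (R i).IsHermitian)
    (Φ : ∀ i : Fin k, Set (Matrix (Fin (n i)) (Fin (n i)) ℂ →ₗ[ℂ] Matrix (Fin (n i)) (Fin (n i)) ℂ))
    (T : ℕ) (hT : 0 < T)
    (ρ : Fin T → ∀ i, Matrix (Fin (n i)) (Fin (n i)) ℂ)
    (hρ : ∀ t i, IsDensity (ρ t i))
    (ε : ℝ)
    (hreg : ∀ i, ∀ φ ∈ Φ i,
      (1 / T : ℝ) * ∑ t, ((R i * extendMap i (⇑φ) (prodProfile (ρ t))).trace).re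
        - (1 / T : ℝ) * ∑ t, ((R i * prodProfile (ρ t)).trace).re ≤ ε) :
    (∃ (m : ℕ) (lam : Fin m → ℝ) (σ : Fin m → ∀ i, Matrix (Fin (n i)) (Fin (n i)) ℂ),
      (∀ l, 0 ≤ lam l) ∧ (∑ l, lam l = 1) ∧ (∀ l i, IsDensity (σ l i)) ∧
      (1 / T : ℂ) • ∑ t, prodProfile (ρ t) = ∑ l, (lam l : ℂ) • prodProfile (σ l))
    ∧ (∀ i, ∀ φ ∈ Φ i,
      ((R i * extendMap i (⇑φ) ((1 / T : ℂ) • ∑ t, prodProfile (ρ t))).trace).re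
        ≤ ((R i * ((1 / T : ℂ) • ∑ t, prodProfile (ρ t))).trace).re + ε) :=
  stmt_2_general R Φ T hT ρ hρ ε hreg
end

section
/- Marginals of a QCCE form a QNE in polymatrix quantum zero-sum games (Lemma 5.3): Consider a polymatrix quantum game on k players with edge set E and edge utility tensors R_{ij}, with player utilities u_i(ρ) = Σ_{j:(i,j)∈E} Tr(R_{ij}·ρ_{ij}), and suppose the game is zero-sum: Σ_{i=1}^k u_i(ρ) = 0 for every joint density matrix ρ. Let ρ be a joint density matrix that is a quantum coarse correlated equilibrium, i.e. u_i(ρ) ≥ u_i(ρ_i' ⊗ Tr_i ρ) for every player i and every density matrix ρ_i' on ℂ^{n_i}. Define the marginalized product state ρ̂ = ⊗_i ρ̂_i where ρ̂_i = Tr_{-i} ρ. Then ρ̂ is a quantum Nash equilibrium: u_i(ρ̂) ≥ u_i(ρ_i' ⊗ (⊗_{j≠i} ρ̂_j)) for every player i and every density matrix ρ_i' on ℂ^{n_i}. -/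
open Matrix
open scoped ComplexOrder

/-- The two-player marginal `ρ_{ij}` of a joint matrix `ρ`. -/
noncomputable def marg2 {k : ℕ} {n : Fin k → ℕ} (i j : Fin k)
    (ρ : Matrix (∀ l, Fin (n l)) (∀ l, Fin (n l)) ℂ) :
    Matrix (Fin (n i) × Fin (n j)) (Fin (n i) × Fin (n j)) ℂ :=
  fun ab a'b' => ∑ s : ∀ l, Fin (n l),
    if s i = ab.1 ∧ s j = ab.2 then
      ρ s (Function.update (Function.update s i a'b'.1) j a'b'.2)
    else 0

/-- Player `i`'s polymatrix utility `u_i(ρ) = Σ_{j:(i,j)∈E} Tr(R_{ij}·ρ_{ij})`. -/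
noncomputable def uPoly {k : ℕ} {n : Fin k → ℕ} (E : Finset (Fin k × Fin k))
    (R : ∀ i j : Fin k, Matrix (Fin (n i) × Fin (n j)) (Fin (n i) × Fin (n j)) ℂ)
    (i : Fin k) (ρ : Matrix (∀ l, Fin (n l)) (∀ l, Fin (n l)) ℂ) : ℝ :=
  (∑ j ∈ Finset.univ.filter (fun j => (i, j) ∈ E), (R i j * marg2 i j ρ).trace).re

/-- The joint matrix `ρᵢ' ⊗ Trᵢ M`. -/
noncomputable def devCCE {k : ℕ} {n : Fin k → ℕ} (i : Fin k)
    (ρ' : Matrix (Fin (n i)) (Fin (n i)) ℂ)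
    (M : Matrix (∀ j, Fin (n j)) (∀ j, Fin (n j)) ℂ) :
    Matrix (∀ j, Fin (n j)) (∀ j, Fin (n j)) ℂ :=
  fun s s' => ρ' (s i) (s' i) * ∑ a, M (Function.update s i a) (Function.update s' i a)

/-- The marginal `Tr₋ᵢ ρ` of a joint matrix on player `i`'s register. -/
noncomputable def margOn {k : ℕ} {n : Fin k → ℕ} (i : Fin k)
    (ρ : Matrix (∀ l, Fin (n l)) (∀ l, Fin (n l)) ℂ) :
    Matrix (Fin (n i)) (Fin (n i)) ℂ :=
  fun a a' => ∑ s : ∀ l, Fin (n l), if s i = a then ρ s (Function.update s i a') else 0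

/-!
Player `i`'s utility sees a joint state only through the two-player marginals `ρ_{ij}`, `j ≠ i`.
For the deviation `ρᵢ' ⊗ Trᵢ ρ` these are `ρᵢ' ⊗ ρ̂ⱼ`, exactly as for `ρᵢ' ⊗ (⊗_{j≠i} ρ̂ⱼ)`, so every
unilateral deviation from `ρ̂` is worth to player `i` what the corresponding QCCE deviation from `ρ`
is worth. Taking `ρᵢ' = ρ̂ᵢ` gives `uᵢ(ρ̂) ≤ uᵢ(ρ)` for every `i`; since `ρ̂` is again a density
matrix, the zero-sum condition forces equality, and then
`uᵢ(ρᵢ' ⊗ ρ̂₋ᵢ) = uᵢ(ρᵢ' ⊗ Trᵢ ρ) ≤ uᵢ(ρ) = uᵢ(ρ̂)`.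
-/

open Function Finset

section

variable {k : ℕ} {n : Fin k → ℕ}

theorem sum_ite_update_eq (i : Fin k) (a c : Fin (n i)) (g : (∀ l, Fin (n l)) → ℂ) :
    ∑ s : ∀ l, Fin (n l), (if s i = a then g (update s i c) else 0)
      = ∑ s : ∀ l, Fin (n l), if s i = c then g s else 0 := by
  simp only [← sum_filter]
  refine sum_nbij' (update · i c) (update · i a) ?_ ?_ ?_ ?_ ?_ <;>
    intro s hs <;> simp only [mem_filter, mem_univ, true_and] at hs <;> simp [← hs]

theorem margOn_eq_sum_submatrix (i : Fin k) (c : Fin (n i))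
    (M : Matrix (∀ l, Fin (n l)) (∀ l, Fin (n l)) ℂ) :
    margOn i M = ∑ t ∈ univ.filter (· i = c), M.submatrix (update t i ·) (update t i ·) := by
  ext a a'
  rw [Matrix.sum_apply, sum_filter, margOn, ← sum_ite_update_eq i c a]
  simp [update_idem]

theorem margOn_posSemidef (i : Fin k) {M : Matrix (∀ l, Fin (n l)) (∀ l, Fin (n l)) ℂ}
    (hM : M.PosSemidef) : (margOn i M).PosSemidef := by
  cases isEmpty_or_nonempty (Fin (n i)) with
  | inl _ => exact Subsingleton.elim (0 : Matrix (Fin (n i)) (Fin (n i)) ℂ) (margOn i M) ▸ .zero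
  | inr h =>
    rw [margOn_eq_sum_submatrix i h.some]
    exact Matrix.posSemidef_sum _ fun t _ => hM.submatrix _

theorem margOn_trace (i : Fin k) (M : Matrix (∀ l, Fin (n l)) (∀ l, Fin (n l)) ℂ) :
    (margOn i M).trace = M.trace := by
  simp only [Matrix.trace, Matrix.diag, margOn]
  rw [sum_comm]
  simp

theorem margOn_isDensity (i : Fin k) {M : Matrix (∀ l, Fin (n l)) (∀ l, Fin (n l)) ℂ}
    (hM : IsDensity M) : IsDensity (margOn i M) :=
  ⟨margOn_posSemidef i hM.1, (margOn_trace i M).trans hM.2⟩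

theorem sum_ite_prod_eq (i : Fin k) (a : Fin (n i)) (F : ∀ l, Fin (n l) → ℂ) :
    ∑ s : ∀ l, Fin (n l), (if s i = a then ∏ l, F l (s l) else 0)
      = F i a * ∏ l ∈ {i}ᶜ, ∑ c, F l c := by
  set G := update F i fun c => if c = a then F i c else 0
  have hG : ∀ l ∈ ({i}ᶜ : Finset (Fin k)), G l = F l := fun l hl =>
    update_of_ne (by simpa using hl) _ _
  calc ∑ s : ∀ l, Fin (n l), (if s i = a then ∏ l, F l (s l) else 0)
      = ∑ s : ∀ l, Fin (n l), ∏ l, G l (s l) := by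
        refine sum_congr rfl fun s _ => ?_
        rw [Fintype.prod_eq_mul_prod_compl i, Fintype.prod_eq_mul_prod_compl i,
          prod_congr rfl fun l hl => congrFun (hG l hl) (s l)]
        split_ifs with h <;> simp [G, h]
    _ = ∏ l, ∑ c, G l c := (Fintype.prod_sum G).symm
    _ = F i a * ∏ l ∈ {i}ᶜ, ∑ c, F l c := by
        rw [Fintype.prod_eq_mul_prod_compl i, prod_congr rfl fun l hl => by rw [hG l hl]]
        simp [G]

theorem prodProfile_trace (f : ∀ l, Matrix (Fin (n l)) (Fin (n l)) ℂ) :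
    (prodProfile f).trace = ∏ l, (f l).trace :=
  (Fintype.prod_sum fun l c => f l c c).symm

theorem prodProfile_conjTranspose (f : ∀ l, Matrix (Fin (n l)) (Fin (n l)) ℂ) :
    (prodProfile f)ᴴ = prodProfile fun l => (f l)ᴴ := by
  ext s s'
  simp [prodProfile]

theorem prodProfile_mul (f g : ∀ l, Matrix (Fin (n l)) (Fin (n l)) ℂ) :
    prodProfile f * prodProfile g = prodProfile fun l => f l * g l := by
  ext s s'
  simp only [Matrix.mul_apply, prodProfile, ← prod_mul_distrib]
  exact (Fintype.prod_sum fun l c => f l (s l) c * g l c (s' l)).symm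

open scoped MatrixOrder in
theorem prodProfile_posSemidef {f : ∀ l, Matrix (Fin (n l)) (Fin (n l)) ℂ}
    (hf : ∀ l, (f l).PosSemidef) : (prodProfile f).PosSemidef := by
  choose S hS using fun l => CStarAlgebra.nonneg_iff_eq_star_mul_self.mp (hf l).nonneg
  have : prodProfile f = (prodProfile S)ᴴ * prodProfile S := by
    rw [prodProfile_conjTranspose, prodProfile_mul]
    exact congrArg prodProfile (funext hS)
  exact this ▸ Matrix.posSemidef_conjTranspose_mul_self _

theorem prodProfile_isDensity {f : ∀ l, Matrix (Fin (n l)) (Fin (n l)) ℂ}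
    (hf : ∀ l, IsDensity (f l)) : IsDensity (prodProfile f) :=
  ⟨prodProfile_posSemidef fun l => (hf l).1, by
    rw [prodProfile_trace]
    exact prod_eq_one fun l _ => (hf l).2⟩

theorem margOn_prodProfile (i : Fin k) (f : ∀ l, Matrix (Fin (n l)) (Fin (n l)) ℂ) :
    margOn i (prodProfile f) = (∏ l ∈ {i}ᶜ, (f l).trace) • f i := by
  ext a a'
  have : ∀ s : ∀ l, Fin (n l), prodProfile f s (update s i a')
      = ∏ l, (update (fun l c => f l c c) i fun c => f i c a') l (s l) := by
    intro s
    refine prod_congr rfl fun l _ => ?_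
    rcases eq_or_ne l i with rfl | h <;> simp [*]
  simp only [margOn, this, sum_ite_prod_eq]
  rw [Matrix.smul_apply, smul_eq_mul, mul_comm]
  simp only [update_self]
  congr 1
  refine prod_congr rfl fun l hl => ?_
  rw [update_of_ne (by simpa using hl)]
  rfl

theorem devCCE_prodProfile (i : Fin k) (σ : Matrix (Fin (n i)) (Fin (n i)) ℂ)
    (f : ∀ l, Matrix (Fin (n l)) (Fin (n l)) ℂ) :
    devCCE i σ (prodProfile f) = (f i).trace • prodProfile (update f i σ) := by
  ext s s'
  have hrest : ∀ a : Fin (n i), ∏ l ∈ {i}ᶜ, f l (update s i a l) (update s' i a l)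
      = ∏ l ∈ {i}ᶜ, update f i σ l (s l) (s' l) :=
    fun a => prod_congr rfl fun l hl => by
      have hl : l ≠ i := by simpa using hl
      simp [hl]
  simp only [devCCE, prodProfile, Matrix.smul_apply, smul_eq_mul]
  rw [Fintype.prod_eq_mul_prod_compl i]
  simp only [Fintype.prod_eq_mul_prod_compl i (f := fun l => f l (update s i _ l) (update s' i _ l)),
    hrest, ← sum_mul, update_self, Matrix.trace, Matrix.diag]
  ring

theorem marg2_devCCE {i j : Fin k} (hij : i ≠ j) (σ : Matrix (Fin (n i)) (Fin (n i)) ℂ)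
    (M : Matrix (∀ l, Fin (n l)) (∀ l, Fin (n l)) ℂ) :
    marg2 i j (devCCE i σ M) = fun x y => σ x.1 y.1 * margOn j M x.2 y.2 := by
  ext ⟨a, b⟩ ⟨a', b'⟩
  set g : (∀ l, Fin (n l)) → ℂ := fun t => if t j = b then M t (update t j b') else 0
  have hsummand : ∀ s : ∀ l, Fin (n l),
      (if s i = a ∧ s j = b then devCCE i σ M s (update (update s i a') j b') else 0)
        = σ a a' * ∑ c, if s i = a then g (update s i c) else 0 := by
    intro s
    by_cases hsi : s i = a
    · have hupd : ∀ c, update (update (update s i a') j b') i c = update (update s i c) j b' :=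
        fun c => by rw [update_comm hij.symm, update_idem]
      simp [devCCE, g, hsi, hij, hij.symm, hupd, mul_sum]
    · simp [hsi]
  calc marg2 i j (devCCE i σ M) (a, b) (a', b')
      = σ a a' * ∑ c, ∑ s : ∀ l, Fin (n l), if s i = a then g (update s i c) else 0 := by
        simp only [marg2, hsummand, ← mul_sum]
        rw [sum_comm]
    _ = σ a a' * ∑ c, ∑ s : ∀ l, Fin (n l), if s i = c then g s else 0 := by
        simp only [sum_ite_update_eq]
    _ = σ a a' * margOn j M b b' := by
        rw [sum_comm]
        simp [g, margOn]

theorem uPoly_congr (E : Finset (Fin k × Fin k))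
    (R : ∀ i j : Fin k, Matrix (Fin (n i) × Fin (n j)) (Fin (n i) × Fin (n j)) ℂ) (i : Fin k)
    {M N : Matrix (∀ l, Fin (n l)) (∀ l, Fin (n l)) ℂ}
    (h : ∀ j, (i, j) ∈ E → marg2 i j M = marg2 i j N) : uPoly E R i M = uPoly E R i N := by
  unfold uPoly
  congr 1
  exact sum_congr rfl fun j hj => by rw [h j (mem_filter.1 hj).2]

theorem uPoly_devCCE_congr {E : Finset (Fin k × Fin k)} (hE : ∀ p ∈ E, p.1 ≠ p.2)
    (R : ∀ i j : Fin k, Matrix (Fin (n i) × Fin (n j)) (Fin (n i) × Fin (n j)) ℂ) (i : Fin k)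
    (σ : Matrix (Fin (n i)) (Fin (n i)) ℂ) {M N : Matrix (∀ l, Fin (n l)) (∀ l, Fin (n l)) ℂ}
    (h : ∀ j ≠ i, margOn j M = margOn j N) :
    uPoly E R i (devCCE i σ M) = uPoly E R i (devCCE i σ N) :=
  uPoly_congr E R i fun j hj => by
    have hij : i ≠ j := hE _ hj
    rw [marg2_devCCE hij, marg2_devCCE hij, h j hij.symm]

theorem uPoly_prodProfile_update_margOn {E : Finset (Fin k × Fin k)} (hE : ∀ p ∈ E, p.1 ≠ p.2)
    (R : ∀ i j : Fin k, Matrix (Fin (n i) × Fin (n j)) (Fin (n i) × Fin (n j)) ℂ)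
    {ρ : Matrix (∀ l, Fin (n l)) (∀ l, Fin (n l)) ℂ} (hρ : ρ.trace = 1) (i : Fin k)
    (σ : Matrix (Fin (n i)) (Fin (n i)) ℂ) :
    uPoly E R i (prodProfile (update (fun l => margOn l ρ) i σ)) = uPoly E R i (devCCE i σ ρ) := by
  have htrace : ∀ l, (margOn l ρ).trace = 1 := fun l => (margOn_trace l ρ).trans hρ
  have hprod := devCCE_prodProfile i σ fun l => margOn l ρ
  rw [htrace, one_smul] at hprod
  rw [← hprod]
  refine uPoly_devCCE_congr hE R i σ fun j _ => ?_
  rw [margOn_prodProfile, prod_eq_one fun l _ => htrace l, one_smul]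

end

theorem stmt_8_general {k : ℕ} {n : Fin k → ℕ} (E : Finset (Fin k × Fin k))
    (hE : ∀ p ∈ E, p.1 ≠ p.2)
    (R : ∀ i j : Fin k, Matrix (Fin (n i) × Fin (n j)) (Fin (n i) × Fin (n j)) ℂ)
    (hzero : ∀ ρ : Matrix (∀ l, Fin (n l)) (∀ l, Fin (n l)) ℂ, IsDensity ρ →
      ∑ i, uPoly E R i ρ = 0)
    (ρ : Matrix (∀ l, Fin (n l)) (∀ l, Fin (n l)) ℂ) (hρ : IsDensity ρ)
    (hQCCE : ∀ i, ∀ ρ' : Matrix (Fin (n i)) (Fin (n i)) ℂ, IsDensity ρ' →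
      uPoly E R i (devCCE i ρ' ρ) ≤ uPoly E R i ρ) :
    ∀ i, ∀ ρ' : Matrix (Fin (n i)) (Fin (n i)) ℂ, IsDensity ρ' →
      uPoly E R i (prodProfile (Function.update (fun l => margOn l ρ) i ρ'))
        ≤ uPoly E R i (prodProfile (fun l => margOn l ρ)) := by
  intro i ρ' hρ'
  have hdev := uPoly_prodProfile_update_margOn hE R hρ.2
  have hle : ∀ l, uPoly E R l (prodProfile fun m => margOn m ρ) ≤ uPoly E R l ρ := fun l => by
    rw [← update_eq_self l fun m => margOn m ρ, hdev]
    exact hQCCE l _ (margOn_isDensity l hρ)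
  have heq : uPoly E R i (prodProfile fun m => margOn m ρ) = uPoly E R i ρ :=
    (sum_eq_sum_iff_of_le fun l _ => hle l).1
      (by rw [hzero _ (prodProfile_isDensity fun l => margOn_isDensity l hρ), hzero ρ hρ]) i
      (mem_univ i)
  calc uPoly E R i (prodProfile (update (fun l => margOn l ρ) i ρ'))
      = uPoly E R i (devCCE i ρ' ρ) := hdev i ρ'
    _ ≤ uPoly E R i ρ := hQCCE i ρ' hρ'
    _ = uPoly E R i (prodProfile fun l => margOn l ρ) := heq.symm

/-- Marginals of a QCCE form a QNE in polymatrix quantum zero-sum games (Lemma 5.3). -/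
theorem stmt_8 {k : ℕ} {n : Fin k → ℕ} (E : Finset (Fin k × Fin k))
    (hE : ∀ p ∈ E, p.1 ≠ p.2)
    (R : ∀ i j : Fin k, Matrix (Fin (n i) × Fin (n j)) (Fin (n i) × Fin (n j)) ℂ)
    (hR : ∀ i j, (R i j).IsHermitian)
    (hzero : ∀ ρ : Matrix (∀ l, Fin (n l)) (∀ l, Fin (n l)) ℂ, IsDensity ρ →
      ∑ i, uPoly E R i ρ = 0)
    (ρ : Matrix (∀ l, Fin (n l)) (∀ l, Fin (n l)) ℂ) (hρ : IsDensity ρ)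
    (hQCCE : ∀ i, ∀ ρ' : Matrix (Fin (n i)) (Fin (n i)) ℂ, IsDensity ρ' →
      uPoly E R i (devCCE i ρ' ρ) ≤ uPoly E R i ρ) :
    ∀ i, ∀ ρ' : Matrix (Fin (n i)) (Fin (n i)) ℂ, IsDensity ρ' →
      uPoly E R i (prodProfile (Function.update (fun l => margOn l ρ) i ρ'))
        ≤ uPoly E R i (prodProfile (fun l => margOn l ρ)) :=
  stmt_8_general E hE R hzero ρ hρ hQCCE
end

section
/- Spectrahedral characterization of quantum coarse correlated equilibria: Fix a k-player quantum game with utility tensors R_i and let ρ* be a joint density matrix indexed by S×S, S = ∏_j Fin n_j. Then ρ* is a quantum coarse correlated equilibrium — i.e. Tr(R_i·(ρ_i' ⊗ Tr_i ρ*)) ≤ Tr(R_i·ρ*) for every player i and every density matrix ρ_i' on ℂ^{n_i} — if and only if for every player i the n_i×n_i Hermitian matrix Tr(R_i·ρ*)·I_{n_i} − Θ_i(Tr_i ρ*) is positive semidefinite, where Θ_i(σ) is the n_i×n_i matrix with entries (Θ_i(σ))(a,a') = Σ_{t,t'} R_i((a;t),(a';t'))·σ(t',t). -/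
/-! By the defining property of `Θᵢ`, player `i`'s deviation payoff `Tr(Rᵢ (ρ' ⊗ Trᵢ ρ*))` equals
`Tr(Θᵢ(Trᵢ ρ*) ρ')`, so being a coarse correlated equilibrium says that the linear functional
`ρ' ↦ Tr((c • 1 - Θᵢ) ρ')`, with `c = Tr(Rᵢ ρ*)`, is nonnegative on density matrices. For a
Hermitian matrix this is positive semidefiniteness: one direction because the trace of a product
of positive semidefinite matrices is nonnegative, the other by testing on the normalized rank-one
projections `x x* / ‖x‖²`. -/

open Matrix
open scoped ComplexOrder

/-- The matrix `Θᵢ(Trᵢ ρ)`, with entries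
`(Θᵢ(σ))(a,a') = Σ_{t,t'} Rᵢ((a;t),(a';t'))·σ(t',t)` evaluated at `σ = Trᵢ ρ`.
The sums over the off-`i` tuples `t, t'` are realized as sums over full profiles
`s, s'` whose `i`-th coordinates are pinned to `a, a'`. -/
noncomputable def ThetaTri {k : ℕ} {n : Fin k → ℕ}
    (R : Matrix (∀ j, Fin (n j)) (∀ j, Fin (n j)) ℂ) (i : Fin k)
    (ρ : Matrix (∀ j, Fin (n j)) (∀ j, Fin (n j)) ℂ) :
    Matrix (Fin (n i)) (Fin (n i)) ℂ :=
  fun a a' => ∑ s : ∀ j, Fin (n j), ∑ s' : ∀ j, Fin (n j),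
    if s i = a ∧ s' i = a' then
      R s s' * ∑ b, ρ (Function.update s' i b) (Function.update s i b)
    else 0

section

variable {d : Type*} [Fintype d]

lemma Complex.le_iff_re_le_re_of_star_eq {z w : ℂ} (hz : star z = z) (hw : star w = w) :
    z ≤ w ↔ z.re ≤ w.re := by
  rw [← Complex.conj_eq_iff_re.mp hz, ← Complex.conj_eq_iff_re.mp hw, Complex.real_le_real]
  simp

lemma Matrix.IsHermitian.star_trace_mul {A B : Matrix d d ℂ} (hA : A.IsHermitian)
    (hB : B.IsHermitian) : star (A * B).trace = (A * B).trace := by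
  rw [← trace_conjTranspose, conjTranspose_mul, hA.eq, hB.eq, trace_mul_comm]

open scoped MatrixOrder Matrix.Norms.L2Operator in
lemma Matrix.PosSemidef.trace_mul_nonneg_s11 [DecidableEq d] {A P : Matrix d d ℂ}
    (hA : A.PosSemidef) (hP : P.PosSemidef) : 0 ≤ (A * P).trace := by
  obtain ⟨B, rfl⟩ := CStarAlgebra.nonneg_iff_eq_star_mul_self.mp hP.nonneg
  rw [star_eq_conjTranspose, ← Matrix.mul_assoc, trace_mul_comm, ← Matrix.mul_assoc]
  exact (hA.mul_mul_conjTranspose_same B).trace_nonneg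

lemma Matrix.trace_mul_vecMulVec_star (A : Matrix d d ℂ) (x : d → ℂ) :
    (A * vecMulVec x (star x)).trace = star x ⬝ᵥ A *ᵥ x := by
  rw [mul_vecMulVec, trace_vecMulVec, dotProduct_comm]

lemma isDensity_inv_dotProduct_smul_vecMulVec {x : d → ℂ} (hx : x ≠ 0) :
    IsDensity ((star x ⬝ᵥ x)⁻¹ • vecMulVec x (star x)) := by
  have hnorm : star x ⬝ᵥ x ≠ 0 := fun h => hx (dotProduct_star_self_eq_zero.mp h)
  refine ⟨(posSemidef_vecMulVec_self_star x).smul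
    (inv_nonneg.mpr (dotProduct_star_self_nonneg x)), ?_⟩
  rw [trace_smul, trace_vecMulVec, dotProduct_comm x, smul_eq_mul, inv_mul_cancel₀ hnorm]

lemma Matrix.IsHermitian.posSemidef_iff_forall_isDensity [DecidableEq d] {A : Matrix d d ℂ}
    (hA : A.IsHermitian) : A.PosSemidef ↔ ∀ ρ, IsDensity ρ → 0 ≤ (A * ρ).trace := by
  refine ⟨fun h ρ hρ => h.trace_mul_nonneg_s11 hρ.1, fun h => ?_⟩
  refine PosSemidef.of_dotProduct_mulVec_nonneg hA fun x => ?_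
  by_cases hx : x = 0
  · simp [hx]
  have hnorm : star x ⬝ᵥ x ≠ 0 := fun h => hx (dotProduct_star_self_eq_zero.mp h)
  have := h _ (isDensity_inv_dotProduct_smul_vecMulVec hx)
  rw [Matrix.mul_smul, trace_smul, trace_mul_vecMulVec_star, smul_eq_mul] at this
  calc (0 : ℂ) ≤ (star x ⬝ᵥ x) * ((star x ⬝ᵥ x)⁻¹ * (star x ⬝ᵥ A *ᵥ x)) :=
        mul_nonneg (dotProduct_star_self_nonneg x) this
    _ = star x ⬝ᵥ A *ᵥ x := mul_inv_cancel_left₀ hnorm _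

lemma posSemidef_smul_one_sub_iff_forall_isDensity [DecidableEq d] {Θ : Matrix d d ℂ}
    (hΘ : Θ.IsHermitian) {c : ℂ} (hc : star c = c) :
    (c • 1 - Θ).PosSemidef ↔ ∀ ρ, IsDensity ρ → ((Θ * ρ).trace).re ≤ c.re := by
  have hM : (c • 1 - Θ : Matrix d d ℂ).IsHermitian := by
    refine IsHermitian.sub ?_ hΘ
    rw [IsHermitian, conjTranspose_smul, conjTranspose_one, hc]
  rw [hM.posSemidef_iff_forall_isDensity]
  refine forall₂_congr fun ρ hρ => ?_
  rw [sub_mul, trace_sub, smul_mul_assoc, one_mul, trace_smul, hρ.2, smul_eq_mul, mul_one,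
    sub_nonneg, Complex.le_iff_re_le_re_of_star_eq (hΘ.star_trace_mul hρ.1.1) hc]

end

section Game

variable {k : ℕ} {n : Fin k → ℕ}

lemma trace_mul_devCCE (i : Fin k) (R ρ : Matrix (∀ j, Fin (n j)) (∀ j, Fin (n j)) ℂ)
    (ρ' : Matrix (Fin (n i)) (Fin (n i)) ℂ) :
    (R * devCCE i ρ' ρ).trace = (ThetaTri R i ρ * ρ').trace := by
  simp only [trace, diag, mul_apply, devCCE, ThetaTri, Finset.sum_mul, ite_mul, zero_mul]
  simp only [Finset.sum_comm (γ := Fin (n i)) (α := ∀ j, Fin (n j))]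
  refine Finset.sum_congr rfl fun s _ => Finset.sum_congr rfl fun s' _ => ?_
  simp only [ite_and, Finset.sum_ite_irrel, Finset.sum_ite_eq, Finset.mem_univ, ↓reduceIte,
    Finset.sum_const_zero]
  ring

lemma isHermitian_thetaTri (i : Fin k) {R ρ : Matrix (∀ j, Fin (n j)) (∀ j, Fin (n j)) ℂ}
    (hR : R.IsHermitian) (hρ : ρ.IsHermitian) : (ThetaTri R i ρ).IsHermitian := by
  ext a a'
  simp only [conjTranspose_apply, ThetaTri, star_sum]
  rw [Finset.sum_comm]
  refine Finset.sum_congr rfl fun s _ => Finset.sum_congr rfl fun s' _ => ?_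
  simp only [and_comm (a := s' i = a')]
  split_ifs <;> simp [star_sum, hR.apply, hρ.apply]

end Game

/-- Spectrahedral characterization of quantum coarse correlated equilibria. -/
theorem stmt_11 {k : ℕ} {n : Fin k → ℕ}
    (R : ∀ _ : Fin k, Matrix (∀ j, Fin (n j)) (∀ j, Fin (n j)) ℂ)
    (hR : ∀ i, (R i).IsHermitian)
    (ρstar : Matrix (∀ j, Fin (n j)) (∀ j, Fin (n j)) ℂ) (hρstar : IsDensity ρstar) :
    (∀ i, ∀ ρ' : Matrix (Fin (n i)) (Fin (n i)) ℂ, IsDensity ρ' →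
      ((R i * devCCE i ρ' ρstar).trace).re ≤ ((R i * ρstar).trace).re)
    ↔ (∀ i, ((R i * ρstar).trace • (1 : Matrix (Fin (n i)) (Fin (n i)) ℂ)
        - ThetaTri (R i) i ρstar).PosSemidef) := by
  refine forall_congr' fun i => ?_
  simp only [trace_mul_devCCE]
  exact (posSemidef_smul_one_sub_iff_forall_isDensity
    (isHermitian_thetaTri i (hR i) hρstar.1.1) ((hR i).star_trace_mul hρstar.1.1)).symm
end

section
/- Exploitability characterization of quantum Nash equilibria: Fix a k-player quantum game with utility tensors R_i and let ρ = ⊗_i ρ_i be a product profile. For each player i, let λ_max(Θ_i(ρ_{-i})) denote the largest eigenvalue of the Hermitian matrix Θ_i(ρ_{-i}), where ρ_{-i} = ⊗_{j≠i} ρ_j. Then λ_max(Θ_i(ρ_{-i})) − Tr(R_i·ρ) ≥ 0 for every player i, and the sum Σ_{i=1}^k [λ_max(Θ_i(ρ_{-i})) − Tr(R_i·ρ)] equals 0 if and only if ρ is a quantum Nash equilibrium, i.e. Tr(R_i·(ρ_i' ⊗ ρ_{-i})) ≤ Tr(R_i·ρ) for every player i and every density matrix ρ_i' on ℂ^{n_i}.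 -/
open Matrix
open scoped ComplexOrder

/-- The matrix `Θᵢ(ρ₋ᵢ)` where `ρ₋ᵢ = ⊗_{j≠i} ρⱼ`, with entries
`(Θᵢ(σ))(a,a') = Σ_{t,t'} Rᵢ((a;t),(a';t'))·σ(t',t)` at `σ = ρ₋ᵢ`.
The sums over off-`i` tuples `t, t'` are realized as sums over full profiles
`s, s'` with `i`-th coordinates pinned to `a, a'`. -/
noncomputable def ThetaProd {k : ℕ} {n : Fin k → ℕ}
    (R : Matrix (∀ j, Fin (n j)) (∀ j, Fin (n j)) ℂ) (i : Fin k)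
    (ρ : ∀ j, Matrix (Fin (n j)) (Fin (n j)) ℂ) :
    Matrix (Fin (n i)) (Fin (n i)) ℂ :=
  fun a a' => ∑ s : ∀ j, Fin (n j), ∑ s' : ∀ j, Fin (n j),
    if s i = a ∧ s' i = a' then
      R s s' * ∏ j ∈ Finset.univ \ {i}, ρ j (s' j) (s j)
    else 0


/-! By the defining identity of `Θᵢ`, player `i`'s utility after deviating to `ρᵢ'` is the
linear functional `ρᵢ' ↦ Tr(Θᵢ(ρ₋ᵢ) ρᵢ')`. Diagonalizing the Hermitian matrix `Θᵢ(ρ₋ᵢ)` shows that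
its maximum over density matrices is `λ_max`, attained at the projection onto a top eigenvector.
So each exploitability is the gain of a best response over `ρᵢ`, hence nonnegative, and a sum of
nonnegative terms vanishes iff every term does, i.e. iff no player gains by deviating. -/

lemma IsDensity.nonempty {d : Type*} [Fintype d] {ρ : Matrix d d ℂ} (h : IsDensity ρ) :
    Nonempty d := by
  by_contra hd
  rw [not_nonempty_iff] at hd
  simpa [Matrix.trace] using h.2

lemma IsDensity.star_mul_mul {d : Type*} [Fintype d] [DecidableEq d] {ρ : Matrix d d ℂ}
    (h : IsDensity ρ) {U : Matrix d d ℂ} (hU : U ∈ unitaryGroup d ℂ) :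
    IsDensity (star U * ρ * U) := by
  refine ⟨by simpa [star_eq_conjTranspose] using h.1.conjTranspose_mul_mul_same U, ?_⟩
  rw [trace_mul_cycle, (mem_unitaryGroup_iff).mp hU, one_mul, h.2]

namespace Matrix.IsHermitian

variable {d : Type*} [Fintype d] [DecidableEq d] {M : Matrix d d ℂ} (hM : M.IsHermitian)

lemma trace_mul_eq_sum_eigenvalues_mul (ρ : Matrix d d ℂ) :
    (M * ρ).trace = ∑ a, (hM.eigenvalues a : ℂ) *
      (star (hM.eigenvectorUnitary : Matrix d d ℂ) * ρ * hM.eigenvectorUnitary) a a := by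
  conv_lhs => rw [hM.spectral_theorem, Unitary.conjStarAlgAut_apply, mul_assoc, mul_assoc,
    trace_mul_comm, mul_assoc, mul_assoc]
  simp [trace, diagonal_mul, mul_assoc]

lemma re_trace_mul_le_iSup_eigenvalues {ρ : Matrix d d ℂ} (hρ : IsDensity ρ) :
    (M * ρ).trace.re ≤ ⨆ a, hM.eigenvalues a := by
  set σ := star (hM.eigenvectorUnitary : Matrix d d ℂ) * ρ * hM.eigenvectorUnitary
  have hσ : IsDensity σ := hρ.star_mul_mul hM.eigenvectorUnitary.2
  have hdiag : ∀ a, 0 ≤ (σ a a).re := fun a => (Complex.le_def.mp (hσ.1.diag_nonneg (i := a))).1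
  calc (M * ρ).trace.re = ∑ a, hM.eigenvalues a * (σ a a).re := by
        simp [hM.trace_mul_eq_sum_eigenvalues_mul, σ, Complex.re_sum]
    _ ≤ ∑ a, (⨆ b, hM.eigenvalues b) * (σ a a).re := by
        gcongr with a
        · exact hdiag a
        · exact le_ciSup (Set.finite_range hM.eigenvalues).bddAbove a
    _ = ⨆ a, hM.eigenvalues a := by
        rw [← Finset.mul_sum, ← Complex.re_sum]
        change _ * σ.trace.re = _
        rw [hσ.2, Complex.one_re, mul_one]

lemma exists_isDensity_re_trace_mul_eq_iSup [Nonempty d] :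
    ∃ ρ, IsDensity ρ ∧ (M * ρ).trace.re = ⨆ a, hM.eigenvalues a := by
  obtain ⟨a₀, ha₀⟩ := Finite.exists_max hM.eigenvalues
  set U : Matrix d d ℂ := (hM.eigenvectorUnitary : Matrix d d ℂ)
  set P : Matrix d d ℂ := diagonal (Pi.single a₀ 1)
  have hP : IsDensity P := by
    refine ⟨PosSemidef.diagonal fun a => ?_, by simp [P, trace_diagonal]⟩
    rcases eq_or_ne a a₀ with rfl | h <;> simp [*]
  have hUU : star U * U = 1 := Unitary.coe_star_mul_self _
  refine ⟨U * P * star U,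
    by simpa using hP.star_mul_mul (Unitary.star_mem hM.eigenvectorUnitary.2), ?_⟩
  have hconj : star U * (U * P * star U) * U = P := by
    simp only [← mul_assoc, hUU, one_mul]
    rw [mul_assoc, hUU, mul_one]
  rw [hM.trace_mul_eq_sum_eigenvalues_mul, hconj,
    le_antisymm (ciSup_le ha₀) (le_ciSup (Set.finite_range hM.eigenvalues).bddAbove a₀)]
  simp [P, Pi.single_apply]

lemma isGreatest_re_trace_mul_density [Nonempty d] :
    IsGreatest ((fun ρ => (M * ρ).trace.re) '' {ρ | IsDensity ρ}) (⨆ a, hM.eigenvalues a) := by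
  obtain ⟨ρ, hρ, hval⟩ := hM.exists_isDensity_re_trace_mul_eq_iSup
  exact ⟨⟨ρ, hρ, hval⟩, Set.forall_mem_image.2 fun _ => hM.re_trace_mul_le_iSup_eigenvalues⟩

end Matrix.IsHermitian

section ProductProfile

variable {k : ℕ} {n : Fin k → ℕ}

lemma prodProfile_update_apply (ρ : ∀ j, Matrix (Fin (n j)) (Fin (n j)) ℂ) (i : Fin k)
    (ρ' : Matrix (Fin (n i)) (Fin (n i)) ℂ) (s s' : ∀ j, Fin (n j)) :
    prodProfile (Function.update ρ i ρ') s s' =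
      ρ' (s i) (s' i) * ∏ j ∈ Finset.univ \ {i}, ρ j (s j) (s' j) := by
  simp only [prodProfile, Function.apply_update (fun j (M : Matrix (Fin (n j)) (Fin (n j)) ℂ) =>
    M (s j) (s' j)), Finset.prod_update_of_mem (Finset.mem_univ i)]

lemma trace_mul_prodProfile_update (R : Matrix (∀ j, Fin (n j)) (∀ j, Fin (n j)) ℂ) (i : Fin k)
    (ρ : ∀ j, Matrix (Fin (n j)) (Fin (n j)) ℂ) (ρ' : Matrix (Fin (n i)) (Fin (n i)) ℂ) :
    (R * prodProfile (Function.update ρ i ρ')).trace = (ThetaProd R i ρ * ρ').trace := by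
  set P := fun s s' : ∀ j, Fin (n j) => ∏ j ∈ Finset.univ \ {i}, ρ j (s' j) (s j)
  calc (R * prodProfile (Function.update ρ i ρ')).trace
      = ∑ s, ∑ s', ∑ a, ∑ a', if s i = a ∧ s' i = a' then R s s' * P s s' * ρ' a' a else 0 :=
        Finset.sum_congr rfl fun s _ => Finset.sum_congr rfl fun s' _ => by
          simp only [prodProfile_update_apply, ite_and, Finset.sum_ite_irrel, Finset.sum_ite_eq,
            Finset.mem_univ, if_true, Finset.sum_const_zero, P]
          ring
    _ = ∑ a, ∑ a', ∑ s, ∑ s', if s i = a ∧ s' i = a' then R s s' * P s s' * ρ' a' a else 0 :=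
        Finset.sum_comm_cycle.trans (Finset.sum_congr rfl fun _ _ => Finset.sum_comm_cycle)
    _ = (ThetaProd R i ρ * ρ').trace := by
        simp only [trace, diag, mul_apply, ThetaProd, Finset.sum_mul, ite_mul, zero_mul, P]

end ProductProfile

theorem stmt_12_general {k : ℕ} {n : Fin k → ℕ}
    (R : ∀ _ : Fin k, Matrix (∀ j, Fin (n j)) (∀ j, Fin (n j)) ℂ)
    (ρ : ∀ i, Matrix (Fin (n i)) (Fin (n i)) ℂ) (hρ : ∀ i, IsDensity (ρ i))
    (hTh : ∀ i, (ThetaProd (R i) i ρ).IsHermitian) :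
    (∀ i, 0 ≤ (⨆ a, (hTh i).eigenvalues a) - ((R i * prodProfile ρ).trace).re)
    ∧ ((∑ i, ((⨆ a, (hTh i).eigenvalues a) - ((R i * prodProfile ρ).trace).re) = 0)
      ↔ (∀ i, ∀ ρ' : Matrix (Fin (n i)) (Fin (n i)) ℂ, IsDensity ρ' →
          ((R i * prodProfile (Function.update ρ i ρ')).trace).re
            ≤ ((R i * prodProfile ρ).trace).re)) := by
  have hbest : ∀ i, IsGreatest
      ((fun ρ' => (R i * prodProfile (Function.update ρ i ρ')).trace.re) '' {ρ' | IsDensity ρ'})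
      (⨆ a, (hTh i).eigenvalues a) := fun i => by
    have := (hρ i).nonempty
    simpa only [trace_mul_prodProfile_update] using (hTh i).isGreatest_re_trace_mul_density
  have hself : ∀ i, (R i * prodProfile ρ).trace.re ≤ ⨆ a, (hTh i).eigenvalues a := fun i => by
    simpa using (hbest i).2 ⟨ρ i, hρ i, rfl⟩
  have hnonneg := fun i => sub_nonneg.2 (hself i)
  have hzero_iff : ∀ i, (⨆ a, (hTh i).eigenvalues a) - (R i * prodProfile ρ).trace.re = 0 ↔
      ∀ ρ', IsDensity ρ' → (R i * prodProfile (Function.update ρ i ρ')).trace.re ≤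
        (R i * prodProfile ρ).trace.re := fun i => by
    rw [sub_eq_zero, ← (hself i).ge_iff_eq', isLUB_le_iff (hbest i).isLUB, mem_upperBounds,
      Set.forall_mem_image]
    rfl
  refine ⟨hnonneg, ?_⟩
  simp only [Finset.sum_eq_zero_iff_of_nonneg fun i _ => hnonneg i, Finset.mem_univ, true_implies,
    hzero_iff]

/-- Exploitability characterization of quantum Nash equilibria: each player's
exploitability `λ_max(Θᵢ(ρ₋ᵢ)) − Tr(Rᵢ ρ)` is nonnegative, and the total
exploitability vanishes iff the product profile `ρ = ⊗ᵢ ρᵢ` is a quantum Nash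
equilibrium. -/
theorem stmt_12 {k : ℕ} {n : Fin k → ℕ}
    (R : ∀ _ : Fin k, Matrix (∀ j, Fin (n j)) (∀ j, Fin (n j)) ℂ)
    (hR : ∀ i, (R i).IsHermitian)
    (ρ : ∀ i, Matrix (Fin (n i)) (Fin (n i)) ℂ) (hρ : ∀ i, IsDensity (ρ i))
    (hTh : ∀ i, (ThetaProd (R i) i ρ).IsHermitian) :
    (∀ i, 0 ≤ (⨆ a, (hTh i).eigenvalues a) - ((R i * prodProfile ρ).trace).re)
    ∧ ((∑ i, ((⨆ a, (hTh i).eigenvalues a) - ((R i * prodProfile ρ).trace).re) = 0)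
      ↔ (∀ i, ∀ ρ' : Matrix (Fin (n i)) (Fin (n i)) ℂ, IsDensity ρ' →
          ((R i * prodProfile (Function.update ρ i ρ')).trace).re
            ≤ ((R i * prodProfile ρ).trace).re)) :=
  stmt_12_general R ρ hρ hTh
end
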